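/- Let q be a positive integer, φ₁,…,φ_N reals, c₁,…,c_N complex with |c_n| ≤ a_n where a_n ≥ 0. Define the Fejér kernel K_T(t) = (1 − |t|/T)·𝟙_{|t| ≤ T}. Then for any real H and T > 0, ∫_ℝ K_T(t − H) |∑_{n=1}^N c_n e^{i t φ_n}|^{2q} dt ≤ ∫_ℝ K_T(t) |∑_{n=1}^N a_n e^{i t φ_n}|^{2q} dt. -/

import Mathlib

/-!
Write `S(t) = ∑ cₙ e^{itφₙ}`. Then `S(t)^q = ∑ₘ Cₘ e^{itλₘ}` over `q`-tuples `m`, with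
`Cₘ = ∏ⱼ c_{mⱼ}` and `λₘ = ∑ⱼ φ_{mⱼ}`, and expanding `|S(t)|^{2q} = |S(t)^q|²` gives
`∫ K(t - H) |S(t)|^{2q} dt = Re ∑_{m,m'} Cₘ C̄_{m'} e^{iH(λₘ - λ_{m'})} K̂(λₘ - λ_{m'})`,
where `K̂(u) = ∫ K(t) e^{itu} dt`. For the Fejér kernel `K̂(u) = 2(1 - cos Tu)/(Tu²) ≥ 0`, so the
triangle inequality and `|Cₘ| ≤ ∏ⱼ a_{mⱼ}` bound this by the same sum for the coefficients `a`
and `H = 0`, which is the right-hand side.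
-/

open MeasureTheory Complex
open scoped ComplexOrder

noncomputable def expSum {ι : Type*} [Fintype ι] (b : ι → ℂ) (ξ : ι → ℝ) (t : ℝ) : ℂ :=
  ∑ i, b i * exp (I * t * ξ i)

noncomputable def fourierExp (K : ℝ → ℝ) (u : ℝ) : ℂ := ∫ t, (K t : ℂ) * exp (I * t * u)

lemma norm_exp_I_mul_ofReal_mul_ofReal (t u : ℝ) : ‖exp (I * t * u)‖ = 1 := by
  rw [show I * t * u = ((t * u : ℝ) : ℂ) * I by push_cast; ring, norm_exp_ofReal_mul_I]

lemma integrable_shift_mul_exp {K : ℝ → ℝ} (hK : Integrable K) (H u : ℝ) :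
    Integrable fun t : ℝ => (K (t - H) : ℂ) * exp (I * t * u) := by
  have hexp : Continuous fun t : ℝ => exp (I * t * u) := by fun_prop
  refine (((hK.comp_sub_right H).ofReal).bdd_mul (c := 1) hexp.aestronglyMeasurable ?_).congr ?_
  · exact .of_forall fun t => (norm_exp_I_mul_ofReal_mul_ofReal t u).le
  · exact .of_forall fun t => mul_comm _ _

lemma integral_shift_mul_exp (K : ℝ → ℝ) (H u : ℝ) :
    ∫ t, (K (t - H) : ℂ) * exp (I * t * u) = exp (I * H * u) * fourierExp K u := by
  rw [fourierExp, ← integral_const_mul,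
    ← integral_add_right_eq_self (fun t : ℝ => (K (t - H) : ℂ) * exp (I * t * u)) H]
  congr 1 with t
  rw [add_sub_cancel_right, mul_left_comm, ← exp_add]
  push_cast
  ring_nf

section expSum

variable {ι : Type*} [Fintype ι]

lemma expSum_pow (b : ι → ℂ) (ξ : ι → ℝ) (q : ℕ) (t : ℝ) :
    expSum b ξ t ^ q = expSum (fun m : Fin q → ι => ∏ j, b (m j)) (fun m => ∑ j, ξ (m j)) t := by
  rw [expSum, Finset.sum_pow', Fintype.piFinset_univ]
  refine Finset.sum_congr rfl fun m _ => ?_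
  rw [Finset.prod_mul_distrib, ← exp_sum]
  push_cast
  rw [Finset.mul_sum]

lemma norm_sq_expSum (b : ι → ℂ) (ξ : ι → ℝ) (t : ℝ) :
    (‖expSum b ξ t‖ ^ 2 : ℂ) =
      ∑ i, ∑ j, b i * starRingEnd ℂ (b j) * exp (I * t * ↑(ξ i - ξ j)) := by
  rw [← mul_conj', expSum, map_sum, Finset.sum_mul_sum]
  refine Finset.sum_congr rfl fun i _ => Finset.sum_congr rfl fun j _ => ?_
  rw [map_mul, ← exp_conj, mul_mul_mul_comm, ← exp_add]
  simp only [map_mul, conj_I, conj_ofReal]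
  push_cast
  ring_nf

lemma integral_shift_mul_norm_sq_expSum {K : ℝ → ℝ} (hK : Integrable K) (H : ℝ)
    (b : ι → ℂ) (ξ : ι → ℝ) :
    ∫ t, K (t - H) * ‖expSum b ξ t‖ ^ 2 =
      (∑ i, ∑ j, b i * starRingEnd ℂ (b j) *
        (exp (I * H * ↑(ξ i - ξ j)) * fourierExp K (ξ i - ξ j))).re := by
  have hpoint (t : ℝ) : ((K (t - H) * ‖expSum b ξ t‖ ^ 2 : ℝ) : ℂ) =
      ∑ i, ∑ j, b i * starRingEnd ℂ (b j) * ((K (t - H) : ℂ) * exp (I * t * ↑(ξ i - ξ j))) := by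
    rw [ofReal_mul, ofReal_pow, norm_sq_expSum, Finset.mul_sum]
    refine Finset.sum_congr rfl fun i _ => ?_
    rw [Finset.mul_sum]
    exact Finset.sum_congr rfl fun j _ => by ring
  have hint (i j : ι) :=
    (integrable_shift_mul_exp hK H (ξ i - ξ j)).const_mul (b i * starRingEnd ℂ (b j))
  rw [← ofReal_re (∫ t, _), ← integral_complex_ofReal]
  simp_rw [hpoint]
  rw [integral_finsetSum _ fun i _ => integrable_finsetSum _ fun j _ => hint i j]
  simp_rw [integral_finsetSum _ fun j _ => hint _ j, integral_const_mul, integral_shift_mul_exp]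

-- In `ComplexOrder`, `0 ≤ z` means that `z` is real and nonnegative.
lemma integral_shift_mul_norm_sq_expSum_le {K : ℝ → ℝ} (hK : Integrable K)
    (hK_nonneg : ∀ u, 0 ≤ fourierExp K u) (H : ℝ) {b : ι → ℂ} {A : ι → ℝ}
    (hbA : ∀ i, ‖b i‖ ≤ A i) (ξ : ι → ℝ) :
    ∫ t, K (t - H) * ‖expSum b ξ t‖ ^ 2 ≤ ∫ t, K t * ‖expSum (fun i => (A i : ℂ)) ξ t‖ ^ 2 := by
  have hterm (i j : ι) : ‖b i * starRingEnd ℂ (b j) *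
      (exp (I * H * ↑(ξ i - ξ j)) * fourierExp K (ξ i - ξ j))‖ ≤
        A i * A j * (fourierExp K (ξ i - ξ j)).re := by
    rw [norm_mul, norm_mul, norm_mul, RCLike.norm_conj, norm_exp_I_mul_ofReal_mul_ofReal, one_mul,
      ← re_eq_norm.mpr (hK_nonneg _)]
    have hA (i : ι) : 0 ≤ A i := (norm_nonneg _).trans (hbA i)
    exact mul_le_mul_of_nonneg_right (mul_le_mul (hbA i) (hbA j) (norm_nonneg _) (hA i))
      (hK_nonneg _).1
  have hright := integral_shift_mul_norm_sq_expSum hK 0 (fun i => (A i : ℂ)) ξ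
  simp only [sub_zero, ofReal_zero, mul_zero, zero_mul, exp_zero, one_mul, conj_ofReal,
    re_sum, re_ofReal_mul, ← ofReal_mul] at hright
  rw [integral_shift_mul_norm_sq_expSum hK H, hright]
  calc _ ≤ ‖∑ i, ∑ j, b i * starRingEnd ℂ (b j) *
          (exp (I * H * ↑(ξ i - ξ j)) * fourierExp K (ξ i - ξ j))‖ := re_le_norm _
    _ ≤ ∑ i, ∑ j, ‖b i * starRingEnd ℂ (b j) *
          (exp (I * H * ↑(ξ i - ξ j)) * fourierExp K (ξ i - ξ j))‖ :=
        (norm_sum_le _ _).trans (Finset.sum_le_sum fun i _ => norm_sum_le _ _)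
    _ ≤ _ := Finset.sum_le_sum fun i _ => Finset.sum_le_sum fun j _ => hterm i j

end expSum

noncomputable def fejerKernel (T t : ℝ) : ℝ := if |t| ≤ T then 1 - |t| / T else 0

lemma fejerKernel_eq_indicator (T : ℝ) :
    fejerKernel T = (Set.Icc (-T) T).indicator fun t => 1 - |t| / T := by
  ext t
  simp only [fejerKernel, Set.indicator_apply, Set.mem_Icc, abs_le]

lemma integrable_fejerKernel (T : ℝ) : Integrable (fejerKernel T) := by
  rw [fejerKernel_eq_indicator, integrable_indicator_iff measurableSet_Icc]
  exact Continuous.integrableOn_Icc (by fun_prop)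

lemma integral_one_sub_div_mul_cos {T u : ℝ} (hT : T ≠ 0) (hu : u ≠ 0) :
    ∫ t in (0 : ℝ)..T, (1 - t / T) * Real.cos (t * u) = (1 - Real.cos (T * u)) / (T * u ^ 2) := by
  have hderiv (t : ℝ) : HasDerivAt
      (fun t => (1 - t / T) * Real.sin (t * u) / u - Real.cos (t * u) / (T * u ^ 2))
      ((1 - t / T) * Real.cos (t * u)) t := by
    have hsin := (hasDerivAt_mul_const (x := t) u).sin
    have hcos := (hasDerivAt_mul_const (x := t) u).cos
    have hlin := ((hasDerivAt_id' t).div_const T).const_sub 1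
    refine (((hlin.mul hsin).div_const u).sub (hcos.div_const (T * u ^ 2))).congr_deriv ?_
    field_simp
    ring
  rw [intervalIntegral.integral_eq_sub_of_hasDerivAt (fun t _ => hderiv t)
    ((by fun_prop : Continuous fun t : ℝ => (1 - t / T) * Real.cos (t * u)).intervalIntegrable _ _)]
  simp only [div_self hT, sub_self, zero_mul, zero_div, Real.sin_zero, Real.cos_zero, mul_zero]
  ring

lemma integral_one_sub_div_mul_cos_nonneg {T : ℝ} (hT : 0 < T) (u : ℝ) :
    0 ≤ ∫ t in (0 : ℝ)..T, (1 - t / T) * Real.cos (t * u) := by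
  rcases eq_or_ne u 0 with rfl | hu
  · refine intervalIntegral.integral_nonneg hT.le fun t ht => ?_
    rw [mul_zero, Real.cos_zero, mul_one, sub_nonneg, div_le_one hT]
    exact ht.2
  · rw [integral_one_sub_div_mul_cos hT.ne' hu]
    have := Real.cos_le_one (T * u)
    positivity

lemma fourierExp_fejerKernel {T : ℝ} (hT : 0 ≤ T) (u : ℝ) :
    fourierExp (fejerKernel T) u = ↑(2 * ∫ t in (0 : ℝ)..T, (1 - t / T) * Real.cos (t * u)) := by
  set g : ℝ → ℂ := fun t => ((1 - |t| / T : ℝ) : ℂ) * exp (I * t * u)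
  have hgc : Continuous g := by fun_prop
  have hind : (fun t => (fejerKernel T t : ℂ) * exp (I * t * u)) =
      (Set.Icc (-T) T).indicator g := by
    ext t
    rw [fejerKernel_eq_indicator]
    by_cases ht : t ∈ Set.Icc (-T) T <;> simp [ht, g]
  have hsym (t : ℝ) (ht : t ∈ Set.uIcc 0 T) :
      g (-t) + g t = ↑(2 * ((1 - t / T) * Real.cos (t * u))) := by
    rw [Set.uIcc_of_le hT] at ht
    simp only [g, abs_neg, abs_of_nonneg ht.1]
    push_cast
    rw [show (2 : ℂ) * ((1 - t / T) * cos (t * u)) = (1 - t / T) * (2 * cos (t * u)) by ring,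
      two_cos]
    ring_nf
  -- split `[-T, T]` at `0` and reflect the left half onto `[0, T]`
  have hreflect := intervalIntegral.integral_comp_neg (a := 0) (b := T) g
  rw [neg_zero] at hreflect
  rw [fourierExp, hind, integral_indicator measurableSet_Icc, integral_Icc_eq_integral_Ioc,
    ← intervalIntegral.integral_of_le (by linarith),
    ← intervalIntegral.integral_add_adjacent_intervals (b := 0) (hgc.intervalIntegrable _ _)
      (hgc.intervalIntegrable _ _), ← hreflect,
    ← intervalIntegral.integral_add (f := fun x => g (-x))
      ((hgc.comp continuous_neg).intervalIntegrable _ _) (hgc.intervalIntegrable _ _),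
    intervalIntegral.integral_congr hsym, intervalIntegral.integral_ofReal, intervalIntegral.integral_const_mul]

lemma fourierExp_fejerKernel_nonneg {T : ℝ} (hT : 0 < T) (u : ℝ) :
    0 ≤ fourierExp (fejerKernel T) u := by
  rw [fourierExp_fejerKernel hT.le, zero_le_real]
  have := integral_one_sub_div_mul_cos_nonneg hT u
  positivity

theorem stmt_3_general (q : ℕ) (N : ℕ) (φ : Fin N → ℝ) (c : Fin N → ℂ)
    (a : Fin N → ℝ) (hca : ∀ n, ‖c n‖ ≤ a n)
    (T H : ℝ) (hT : 0 < T)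
    (K : ℝ → ℝ) (hK : ∀ t, K t = if |t| ≤ T then 1 - |t| / T else 0) :
    (∫ t : ℝ, K (t - H) * ‖∑ n, c n * Complex.exp (Complex.I * t * φ n)‖ ^ (2 * q)) ≤
      ∫ t : ℝ, K t * ‖∑ n, (a n : ℂ) * Complex.exp (Complex.I * t * φ n)‖ ^ (2 * q) := by
  obtain rfl : K = fejerKernel T := funext hK
  have hpow (b : Fin N → ℂ) (t : ℝ) : ‖∑ n, b n * exp (I * t * φ n)‖ ^ (2 * q) =
      ‖expSum (fun m : Fin q → Fin N => ∏ j, b (m j)) (fun m => ∑ j, φ (m j)) t‖ ^ 2 := by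
    rw [← expSum_pow, norm_pow, ← pow_mul, mul_comm q 2]
    rfl
  simp only [hpow, ← ofReal_prod]
  refine integral_shift_mul_norm_sq_expSum_le (integrable_fejerKernel T)
    (fourierExp_fejerKernel_nonneg hT) H (fun m => ?_) _
  rw [norm_prod]
  exact Finset.prod_le_prod (fun j _ => norm_nonneg _) (fun j _ => hca (m j))

theorem stmt_3 (q : ℕ) (hq : 0 < q) (N : ℕ) (φ : Fin N → ℝ) (c : Fin N → ℂ)
    (a : Fin N → ℝ) (ha : ∀ n, 0 ≤ a n) (hca : ∀ n, ‖c n‖ ≤ a n)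
    (T H : ℝ) (hT : 0 < T)
    (K : ℝ → ℝ) (hK : ∀ t, K t = if |t| ≤ T then 1 - |t| / T else 0) :
    (∫ t : ℝ, K (t - H) * ‖∑ n, c n * Complex.exp (Complex.I * t * φ n)‖ ^ (2 * q)) ≤
      ∫ t : ℝ, K t * ‖∑ n, (a n : ℂ) * Complex.exp (Complex.I * t * φ n)‖ ^ (2 * q) :=
  stmt_3_general q N φ c a hca T H hT K hK
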